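/- Consider affine maps v⁺, v⁻ : ℝ² → ℝ² and constants q⁺, q⁻ ∈ ℝ satisfying: σ(1, ∇v⁺, q⁺) n − σ(1, ∇v⁻, q⁻) n = n; v⁺ = v⁻ at every point of [D,E]; tr ∇v⁺ = tr ∇v⁻; and all seven degrees of freedom vanish, N₁ = ⋯ = N₇ = 0. Then such a quadruple exists, is unique, and is given explicitly by v⁺ = v⁻ = 0, q⁺ = −|T⁻|/|T|, q⁻ = |T⁺|/|T|. -/

import Mathlib

open MeasureTheory

noncomputable section

namespace StokesIFE

/-- Euclidean inner product on `ℝ²`. -/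
def dot (x y : Fin 2 → ℝ) : ℝ := x 0 * y 0 + x 1 * y 1

/-- Euclidean length of a vector of `ℝ²`. -/
def len (x : Fin 2 → ℝ) : ℝ := Real.sqrt (dot x x)

/-- Strain tensor `ε(A) = (A + Aᵀ)/2`. -/
def eps (A : Matrix (Fin 2) (Fin 2) ℝ) : Matrix (Fin 2) (Fin 2) ℝ :=
  (2⁻¹ : ℝ) • (A + A.transpose)

/-- Cauchy stress tensor `σ(μ, A, q) = 2 μ ε(A) − q I₂`. -/
def sig (μ : ℝ) (A : Matrix (Fin 2) (Fin 2) ℝ) (q : ℝ) : Matrix (Fin 2) (Fin 2) ℝ :=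
  (2 * μ) • eps A - q • (1 : Matrix (Fin 2) (Fin 2) ℝ)

/-- Mean value of `u` over the segment `[P, Q]` with respect to arclength,
expressed through the affine parametrization of the segment. -/
def edgeMean (P Q : Fin 2 → ℝ) (u : (Fin 2 → ℝ) → ℝ) : ℝ :=
  ∫ s in (0:ℝ)..1, u (P + s • (Q - P))

/-- Two-dimensional Lebesgue area of a subset of `ℝ²`. -/
def area (s : Set (Fin 2 → ℝ)) : ℝ := (volume s).toReal

/-- Squared Frobenius norm of a 2×2 matrix. -/
def frobSq (A : Matrix (Fin 2) (Fin 2) ℝ) : ℝ := ∑ i : Fin 2, ∑ j : Fin 2, (A i j) ^ 2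

/-- A triangle `T = conv{A₁, A₂, A₃}` cut by the segment `[D, E]`, where
`D` lies in the open edge `(A₂, A₃)`, `E` lies in the open edge `(A₁, A₃)`,
and `n` is the unit normal of `E − D` pointing towards `A₃`. -/
structure CutTriangle where
  A₁ : Fin 2 → ℝ
  A₂ : Fin 2 → ℝ
  A₃ : Fin 2 → ℝ
  D : Fin 2 → ℝ
  E : Fin 2 → ℝ
  n : Fin 2 → ℝ
  indep : AffineIndependent ℝ ![A₁, A₂, A₃]
  hD : D ∈ openSegment ℝ A₂ A₃
  hE : E ∈ openSegment ℝ A₁ A₃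
  hn_unit : dot n n = 1
  hn_orth : dot n (E - D) = 0
  hn_sign : 0 < dot n (A₃ - D)

namespace CutTriangle

variable (c : CutTriangle)

/-- Tangent vector `t = (n₂, −n₁)`, the rotation of `n` by `−π/2`. -/
def t : Fin 2 → ℝ := ![c.n 1, -(c.n 0)]

/-- The closed triangle. -/
def T : Set (Fin 2 → ℝ) := convexHull ℝ {c.A₁, c.A₂, c.A₃}

/-- The part of the triangle on the `+` side of the cut. -/
def Tplus : Set (Fin 2 → ℝ) := c.T ∩ {x | 0 ≤ dot c.n (x - c.D)}

/-- The part of the triangle on the `−` side of the cut. -/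
def Tminus : Set (Fin 2 → ℝ) := c.T ∩ {x | dot c.n (x - c.D) ≤ 0}

/-- The piecewise linear function `w(x) = max(⟨n, x − D⟩, 0)`. -/
def w (x : Fin 2 → ℝ) : ℝ := max (dot c.n (x - c.D)) 0

/-- `(g, b)` represents the Crouzeix–Raviart interpolant `x ↦ ⟨g, x⟩ + b` of `u` on `T`:
an affine map whose mean value over each of the three edges coincides with that of `u`. -/
def IsCR (u : (Fin 2 → ℝ) → ℝ) (g : Fin 2 → ℝ) (b : ℝ) : Prop :=
  edgeMean c.A₂ c.A₃ (fun x => dot g x + b) = edgeMean c.A₂ c.A₃ u ∧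
  edgeMean c.A₁ c.A₃ (fun x => dot g x + b) = edgeMean c.A₁ c.A₃ u ∧
  edgeMean c.A₁ c.A₂ (fun x => dot g x + b) = edgeMean c.A₁ c.A₂ u

/-- The componentwise Crouzeix–Raviart interpolant `x ↦ Mπ x + bπ` of a vector-valued `u`. -/
def IsCRvec (u : (Fin 2 → ℝ) → Fin 2 → ℝ) (Mπ : Matrix (Fin 2) (Fin 2) ℝ)
    (bπ : Fin 2 → ℝ) : Prop :=
  ∀ j : Fin 2, c.IsCR (fun x => u x j) (Mπ j) (bπ j)

/-- The piecewise velocity: `x ↦ Mp x + bp` on the `+` side and `x ↦ Mm x + bm`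
on the `−` side. -/
def vtilde (Mp : Matrix (Fin 2) (Fin 2) ℝ) (bp : Fin 2 → ℝ)
    (Mm : Matrix (Fin 2) (Fin 2) ℝ) (bm : Fin 2 → ℝ) (x : Fin 2 → ℝ) : Fin 2 → ℝ :=
  if 0 ≤ dot c.n (x - c.D) then Mp.mulVec x + bp else Mm.mulVec x + bm

/-- The seven local degrees of freedom: edge means of the two velocity components over
the edges `e₁ = [A₂,A₃]`, `e₂ = [A₁,A₃]`, `e₃ = [A₁,A₂]`, and the mean of the
piecewise-constant pressure over `T`. -/
def dof (Mp : Matrix (Fin 2) (Fin 2) ℝ) (bp : Fin 2 → ℝ)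
    (Mm : Matrix (Fin 2) (Fin 2) ℝ) (bm : Fin 2 → ℝ) (qp qm : ℝ) : Fin 7 → ℝ :=
  ![edgeMean c.A₂ c.A₃ (fun x => c.vtilde Mp bp Mm bm x 0),
    edgeMean c.A₁ c.A₃ (fun x => c.vtilde Mp bp Mm bm x 0),
    edgeMean c.A₁ c.A₂ (fun x => c.vtilde Mp bp Mm bm x 0),
    edgeMean c.A₂ c.A₃ (fun x => c.vtilde Mp bp Mm bm x 1),
    edgeMean c.A₁ c.A₃ (fun x => c.vtilde Mp bp Mm bm x 1),
    edgeMean c.A₁ c.A₂ (fun x => c.vtilde Mp bp Mm bm x 1),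
    (area c.Tplus * qp + area c.Tminus * qm) / area c.T]

/-- A local IFE pair: affine velocities `v± = Mp/Mm · x + bp/bm` and constant pressures
`q±` satisfying the stress-jump condition (J1), continuity of the velocity on `[D,E]` (J2)
and continuity of the divergence (J3). -/
def IsIFEPair (μp μm : ℝ) (Mp : Matrix (Fin 2) (Fin 2) ℝ) (bp : Fin 2 → ℝ)
    (Mm : Matrix (Fin 2) (Fin 2) ℝ) (bm : Fin 2 → ℝ) (qp qm : ℝ) : Prop :=
  (sig μp Mp qp).mulVec c.n = (sig μm Mm qm).mulVec c.n ∧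
  (∀ x ∈ segment ℝ c.D c.E, Mp.mulVec x + bp = Mm.mulVec x + bm) ∧
  Mp.trace = Mm.trace

/-- The diameter of the triangle (its longest edge). -/
def hT : ℝ := max (len (c.A₂ - c.A₁)) (max (len (c.A₃ - c.A₁)) (len (c.A₃ - c.A₂)))

/-- The perimeter of the triangle. -/
def perim : ℝ := len (c.A₂ - c.A₁) + len (c.A₃ - c.A₁) + len (c.A₃ - c.A₂)

/-- The inradius of the triangle, `r_T = 2|T| / perimeter`. -/
def rT : ℝ := 2 * area c.T / c.perim

/-- `ϱ`-shape-regularity: `h_T ≤ ϱ r_T`. -/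
def ShapeReg (ϱ : ℝ) : Prop := c.hT ≤ ϱ * c.rT

/-- Arclength of the part of the edge `[P,Q]` lying on the `+` side of the cut. -/
def edgeLenPlus (P Q : Fin 2 → ℝ) : ℝ :=
  len (Q - P) *
    (volume {s : ℝ | s ∈ Set.Icc (0:ℝ) 1 ∧ 0 ≤ dot c.n (P + s • (Q - P) - c.D)}).toReal

/-- Arclength of the part of the edge `[P,Q]` lying on the `−` side of the cut. -/
def edgeLenMinus (P Q : Fin 2 → ℝ) : ℝ :=
  len (Q - P) *
    (volume {s : ℝ | s ∈ Set.Icc (0:ℝ) 1 ∧ dot c.n (P + s • (Q - P) - c.D) ≤ 0}).toReal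

/-- Total arclength of `∂T ∩ T⁺`. -/
def bdryLenPlus : ℝ :=
  c.edgeLenPlus c.A₂ c.A₃ + c.edgeLenPlus c.A₁ c.A₃ + c.edgeLenPlus c.A₁ c.A₂

/-- Total arclength of `∂T ∩ T⁻`. -/
def bdryLenMinus : ℝ :=
  c.edgeLenMinus c.A₂ c.A₃ + c.edgeLenMinus c.A₁ c.A₃ + c.edgeLenMinus c.A₁ c.A₂

end CutTriangle

open intervalIntegral in
lemma integral_affine (a b : ℝ) : (∫ s in (0:ℝ)..1, (a + s * b)) = a + b / 2 := by
  rw [integral_add intervalIntegrable_const (intervalIntegrable_id.mul_const b),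
    intervalIntegral.integral_mul_const]
  simp [integral_id]
  ring

lemma edgeMean_affine (P Q : Fin 2 → ℝ) (M : Matrix (Fin 2) (Fin 2) ℝ) (b : Fin 2 → ℝ)
    (j : Fin 2) :
    edgeMean P Q (fun x => (M.mulVec x + b) j)
      = ((M.mulVec P + b) j + (M.mulVec Q + b) j) / 2 := by
  unfold edgeMean
  have key : ∀ s : ℝ, (M.mulVec (P + s • (Q - P)) + b) j
      = ((M.mulVec P + b) j) + s * ((M.mulVec Q) j - (M.mulVec P) j) := by
    intro s
    fin_cases j <;>
    simp [Matrix.mulVec, dotProduct, Fin.sum_univ_two, Pi.add_apply, Pi.smul_apply,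
      smul_eq_mul, Pi.sub_apply] <;>
    ring
  simp_rw [key]
  rw [integral_affine]
  simp [Pi.add_apply]
  ring

lemma hyper_null (n D : Fin 2 → ℝ) (hn : n 0 * n 0 + n 1 * n 1 = 1) :
    MeasureTheory.volume {x : Fin 2 → ℝ | dot n (x - D) = 0} = 0 := by
  set f : (Fin 2 → ℝ) →ₗ[ℝ] ℝ :=
    { toFun := fun x => n 0 * x 0 + n 1 * x 1
      map_add' := by intro x y; simp; ring
      map_smul' := by intro c x; simp; ring } with hf
  have hset : {x : Fin 2 → ℝ | dot n (x - D) = 0}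
      = ↑(AffineSubspace.mk' D (LinearMap.ker f)) := by
    ext x
    simp only [Set.mem_setOf_eq, SetLike.mem_coe, AffineSubspace.mem_mk',
      LinearMap.mem_ker, hf, LinearMap.coe_mk, AddHom.coe_mk, vsub_eq_sub, Pi.sub_apply, dot]
  rw [hset]
  apply Measure.addHaar_affineSubspace
  intro htop
  have h2 : LinearMap.ker f = ⊤ := by
    have h3 := AffineSubspace.direction_mk' D (LinearMap.ker f)
    rw [htop, AffineSubspace.direction_top] at h3
    exact h3.symm
  have hn0 : n ∈ LinearMap.ker f := h2 ▸ Submodule.mem_top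
  rw [LinearMap.mem_ker] at hn0
  simp only [hf, LinearMap.coe_mk, AddHom.coe_mk] at hn0
  nlinarith

namespace CutTriangle

variable (c : CutTriangle)

lemma isCompact_T : IsCompact c.T :=
  (Set.toFinite {c.A₁, c.A₂, c.A₃}).isCompact_convexHull ℝ

lemma continuous_cut : Continuous (fun x : Fin 2 → ℝ => dot c.n (x - c.D)) := by
  unfold dot
  simp only [Pi.sub_apply]
  fun_prop

lemma measurableSet_T : MeasurableSet c.T :=
  c.isCompact_T.isClosed.measurableSet

lemma measurableSet_Tplus : MeasurableSet c.Tplus :=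
  c.measurableSet_T.inter ((isClosed_le continuous_const c.continuous_cut).measurableSet)

lemma measurableSet_Tminus : MeasurableSet c.Tminus :=
  c.measurableSet_T.inter ((isClosed_le c.continuous_cut continuous_const).measurableSet)

lemma union_TpTm : c.Tplus ∪ c.Tminus = c.T := by
  unfold Tplus Tminus
  rw [← Set.inter_union_distrib_left]
  have huniv : {x : Fin 2 → ℝ | 0 ≤ dot c.n (x - c.D)} ∪ {x | dot c.n (x - c.D) ≤ 0}
      = Set.univ := by
    ext x
    constructor
    · intro _; trivial
    · intro _
      rcases le_total 0 (dot c.n (x - c.D)) with h | h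
      · exact Or.inl h
      · exact Or.inr h
  rw [huniv, Set.inter_univ]

lemma inter_null : MeasureTheory.volume (c.Tplus ∩ c.Tminus) = 0 := by
  have hsub : c.Tplus ∩ c.Tminus ⊆ {x : Fin 2 → ℝ | dot c.n (x - c.D) = 0} := by
    rintro x ⟨⟨-, h1⟩, ⟨-, h2⟩⟩
    exact le_antisymm h2 h1
  exact MeasureTheory.measure_mono_null hsub
    (hyper_null c.n c.D (by have := c.hn_unit; simpa [dot] using this))

lemma vol_add : MeasureTheory.volume c.Tplus + MeasureTheory.volume c.Tminus
    = MeasureTheory.volume c.T := by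
  have h := MeasureTheory.measure_union_add_inter (μ := MeasureTheory.volume)
    c.Tplus c.measurableSet_Tminus
  rw [c.union_TpTm, c.inter_null, add_zero] at h
  exact h.symm

lemma vol_T_lt_top : MeasureTheory.volume c.T < ⊤ :=
  c.isCompact_T.measure_lt_top

lemma vol_T_pos : 0 < MeasureTheory.volume c.T := by
  have hrange : Set.range ![c.A₁, c.A₂, c.A₃] = {c.A₁, c.A₂, c.A₃} := by
    rw [Matrix.range_cons, Matrix.range_cons, Matrix.range_cons_empty]
    rw [Set.insert_eq, Set.insert_eq]
  have hcard : Fintype.card (Fin 3) = Module.finrank ℝ (Fin 2 → ℝ) + 1 := by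
    simp [Module.finrank_fin_fun]
  have htop : affineSpan ℝ (Set.range ![c.A₁, c.A₂, c.A₃]) = ⊤ :=
    c.indep.affineSpan_eq_top_iff_card_eq_finrank_add_one.mpr hcard
  rw [hrange] at htop
  have hconv : Convex ℝ c.T := convex_convexHull ℝ _
  have hspan : affineSpan ℝ c.T = ⊤ := by
    unfold T
    rw [affineSpan_convexHull]
    exact htop
  have hint : (interior c.T).Nonempty :=
    hconv.interior_nonempty_iff_affineSpan_eq_top.mpr hspan
  calc (0 : ENNReal) < MeasureTheory.volume (interior c.T) :=
        (isOpen_interior.measure_pos _ hint)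
    _ ≤ MeasureTheory.volume c.T := MeasureTheory.measure_mono interior_subset

lemma area_T_pos : 0 < area c.T :=
  ENNReal.toReal_pos c.vol_T_pos.ne' c.vol_T_lt_top.ne

lemma area_split : area c.Tplus + area c.Tminus = area c.T := by
  unfold area
  rw [← ENNReal.toReal_add, c.vol_add]
  · exact ((MeasureTheory.measure_mono (Set.inter_subset_left)).trans_lt c.vol_T_lt_top).ne
  · exact ((MeasureTheory.measure_mono (Set.inter_subset_left)).trans_lt c.vol_T_lt_top).ne

lemma weights3 (w0 w1 w2 : ℝ) (hsum : w0 + w1 + w2 = 0)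
    (hcomb : w0 • c.A₁ + w1 • c.A₂ + w2 • c.A₃ = 0) : w0 = 0 ∧ w1 = 0 ∧ w2 = 0 := by
  have h := affineIndependent_iff.mp c.indep Finset.univ ![w0, w1, w2]
    (by simp [Fin.sum_univ_three, hsum])
    (by simpa [Fin.sum_univ_three] using hcomb)
  exact ⟨h 0 (Finset.mem_univ _), h 1 (Finset.mem_univ _), h 2 (Finset.mem_univ _)⟩

lemma D_ne_E : c.D ≠ c.E := by
  intro hDE
  obtain ⟨a, b, ha, hb, hab, hD⟩ := c.hD
  obtain ⟨r, s, hr, hs, hrs, hE⟩ := c.hE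
  have hcomb : (-r) • c.A₁ + a • c.A₂ + (b - s) • c.A₃ = 0 := by
    have : a • c.A₂ + b • c.A₃ = r • c.A₁ + s • c.A₃ := by rw [hD, hE, hDE]
    funext i
    have hi := congrFun this i
    simp only [Pi.add_apply, Pi.smul_apply, smul_eq_mul, Pi.zero_apply] at hi ⊢
    linarith
  obtain ⟨h0, -, -⟩ := c.weights3 (-r) a (b - s) (by linarith) hcomb
  linarith

lemma det_ne : (c.A₂ 0 - c.A₁ 0) * (c.A₃ 1 - c.A₁ 1)
    - (c.A₂ 1 - c.A₁ 1) * (c.A₃ 0 - c.A₁ 0) ≠ 0 := by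
  intro hdet
  have comb : ∀ α β : ℝ,
      α * (c.A₂ 0 - c.A₁ 0) + β * (c.A₃ 0 - c.A₁ 0) = 0 →
      α * (c.A₂ 1 - c.A₁ 1) + β * (c.A₃ 1 - c.A₁ 1) = 0 → α = 0 ∧ β = 0 := by
    intro α β h0 h1
    have h := c.weights3 (-α - β) α β (by ring) ?_
    · exact ⟨h.2.1, h.2.2⟩
    · funext i
      fin_cases i
      · show (-α - β) * c.A₁ 0 + α * c.A₂ 0 + β * c.A₃ 0 = 0
        linarith
      · show (-α - β) * c.A₁ 1 + α * c.A₂ 1 + β * c.A₃ 1 = 0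
        linarith
  obtain ⟨hA, hB⟩ := comb (c.A₃ 1 - c.A₁ 1) (-(c.A₂ 1 - c.A₁ 1)) (by linarith) (by ring)
  have h11 : c.A₂ 1 - c.A₁ 1 = 0 := by linarith
  obtain ⟨hC, hD'⟩ := comb (c.A₃ 0 - c.A₁ 0) (-(c.A₂ 0 - c.A₁ 0)) (by ring)
    (by rw [h11, hA]; ring)
  have h10 : c.A₂ 0 - c.A₁ 0 = 0 := by linarith
  obtain ⟨hone, -⟩ := comb 1 0 (by linarith) (by linarith)
  exact one_ne_zero hone

end CutTriangle


lemma key_alg (p00 p01 p10 p11 m00 m01 m10 m11 qp qm n0 n1 : ℝ)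
    (hn : n0 * n0 + n1 * n1 = 1)
    (he1 : (p00 - m00) * n1 - (p01 - m01) * n0 = 0)
    (he2 : (p10 - m10) * n1 - (p11 - m11) * n0 = 0)
    (htr : p00 + p11 = m00 + m11)
    (h4 : 2*p00*n0 + (p01 + p10)*n1 - qp*n0 - (2*m00*n0 + (m01+m10)*n1 - qm*n0) = n0)
    (h5 : (p01 + p10)*n0 + 2*p11*n1 - qp*n1 - ((m01+m10)*n0 + 2*m11*n1 - qm*n1) = n1) :
    p00 = m00 ∧ p01 = m01 ∧ p10 = m10 ∧ p11 = m11 ∧ qp - qm = -1 := by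
  have hD00 : p00 - m00 = ((p00-m00)*n0 + (p01-m01)*n1) * n0 := by
    linear_combination (-(p00 - m00)) * hn + n1 * he1
  have hD01 : p01 - m01 = ((p00-m00)*n0 + (p01-m01)*n1) * n1 := by
    linear_combination (-(p01 - m01)) * hn - n0 * he1
  have hD10 : p10 - m10 = ((p10-m10)*n0 + (p11-m11)*n1) * n0 := by
    linear_combination (-(p10 - m10)) * hn + n1 * he2
  have hD11 : p11 - m11 = ((p10-m10)*n0 + (p11-m11)*n1) * n1 := by
    linear_combination (-(p11 - m11)) * hn - n0 * he2
  have htrn : ((p00-m00)*n0 + (p01-m01)*n1) * n0 + ((p10-m10)*n0 + (p11-m11)*n1) * n1 = 0 := by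
    linear_combination htr - hD00 - hD11
  have hA0 : (p00-m00)*n0 + (p01-m01)*n1 = (qp - qm + 1) * n0 := by
    linear_combination h4 - n0 * htrn - n0 * hD00 - n1 * hD10
  have hA1 : (p10-m10)*n0 + (p11-m11)*n1 = (qp - qm + 1) * n1 := by
    linear_combination h5 - n1 * htrn - n0 * hD01 - n1 * hD11
  have hd1 : qp - qm + 1 = 0 := by
    linear_combination (-n0) * hA0 + (-n1) * hA1 + htrn + (-(qp - qm + 1)) * hn
  refine ⟨?_, ?_, ?_, ?_, by linarith⟩
  · linear_combination hD00 + n0 * hA0 + n0^2 * hd1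
  · linear_combination hD01 + n1 * hA0 + n0*n1 * hd1
  · linear_combination hD10 + n0 * hA1 + n0*n1 * hd1
  · linear_combination hD11 + n1 * hA1 + n1^2 * hd1

lemma CutTriangle.row_zero (c : CutTriangle) (g0 g1 β : ℝ)
    (h1 : (g0 * c.A₂ 0 + g1 * c.A₂ 1 + β) + (g0 * c.A₃ 0 + g1 * c.A₃ 1 + β) = 0)
    (h2 : (g0 * c.A₁ 0 + g1 * c.A₁ 1 + β) + (g0 * c.A₃ 0 + g1 * c.A₃ 1 + β) = 0)
    (h3 : (g0 * c.A₁ 0 + g1 * c.A₁ 1 + β) + (g0 * c.A₂ 0 + g1 * c.A₂ 1 + β) = 0) :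
    g0 = 0 ∧ g1 = 0 ∧ β = 0 := by
  have f1 : g0 * c.A₁ 0 + g1 * c.A₁ 1 + β = 0 := by linarith
  have f2 : g0 * c.A₂ 0 + g1 * c.A₂ 1 + β = 0 := by linarith
  have f3 : g0 * c.A₃ 0 + g1 * c.A₃ 1 + β = 0 := by linarith
  have hg1 : g0 * (c.A₂ 0 - c.A₁ 0) + g1 * (c.A₂ 1 - c.A₁ 1) = 0 := by
    linear_combination f2 - f1
  have hg2 : g0 * (c.A₃ 0 - c.A₁ 0) + g1 * (c.A₃ 1 - c.A₁ 1) = 0 := by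
    linear_combination f3 - f1
  have hdet := c.det_ne
  have hz0 : g0 * ((c.A₂ 0 - c.A₁ 0) * (c.A₃ 1 - c.A₁ 1)
      - (c.A₂ 1 - c.A₁ 1) * (c.A₃ 0 - c.A₁ 0)) = 0 := by
    linear_combination (c.A₃ 1 - c.A₁ 1) * hg1 - (c.A₂ 1 - c.A₁ 1) * hg2
  have hz1 : g1 * ((c.A₂ 0 - c.A₁ 0) * (c.A₃ 1 - c.A₁ 1)
      - (c.A₂ 1 - c.A₁ 1) * (c.A₃ 0 - c.A₁ 0)) = 0 := by
    linear_combination (-(c.A₃ 0 - c.A₁ 0)) * hg1 + (c.A₂ 0 - c.A₁ 0) * hg2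
  have hg0 : g0 = 0 := (mul_eq_zero.mp hz0).resolve_right hdet
  have hg1' : g1 = 0 := (mul_eq_zero.mp hz1).resolve_right hdet
  refine ⟨hg0, hg1', by rw [hg0, hg1'] at f1; linarith⟩


/-- the quadruple `(v⁺, v⁻, q⁺, q⁻)` (with `v± x = M± x + b±`) satisfying the
normal stress-jump `σ(1,∇v⁺,q⁺)n − σ(1,∇v⁻,q⁻)n = n`, continuity on `[D,E]`, divergence
continuity and vanishing degrees of freedom exists, is unique, and is given explicitly by
`v⁺ = v⁻ = 0`, `q⁺ = −|T⁻|/|T|`, `q⁻ = |T⁺|/|T|`. -/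
theorem statement4 (c : CutTriangle)
    (Mp Mm : Matrix (Fin 2) (Fin 2) ℝ) (bp bm : Fin 2 → ℝ) (qp qm : ℝ) :
    ((sig 1 Mp qp).mulVec c.n - (sig 1 Mm qm).mulVec c.n = c.n ∧
      (∀ x ∈ segment ℝ c.D c.E, Mp.mulVec x + bp = Mm.mulVec x + bm) ∧
      Mp.trace = Mm.trace ∧
      c.dof Mp bp Mm bm qp qm = 0) ↔
    (Mp = 0 ∧ bp = 0 ∧ Mm = 0 ∧ bm = 0 ∧
      qp = -(area c.Tminus / area c.T) ∧ qm = area c.Tplus / area c.T) := by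
  have hat : area c.T ≠ 0 := ne_of_gt c.area_T_pos
  have hsum : area c.Tplus + area c.Tminus = area c.T := c.area_split
  constructor
  · rintro ⟨hJ1, hJ2, hJ3, hdof⟩
    have hDeq := hJ2 c.D (left_mem_segment ℝ _ _)
    have hEeq := hJ2 c.E (right_mem_segment ℝ _ _)
    have hn_unit := c.hn_unit
    have hn_orth := c.hn_orth
    simp only [dot, Pi.sub_apply] at hn_unit hn_orth
    have hD0 := congrFun hDeq 0
    have hD1 := congrFun hDeq 1
    have hE0 := congrFun hEeq 0
    have hE1 := congrFun hEeq 1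
    simp only [Pi.add_apply, Matrix.mulVec, dotProduct, Fin.sum_univ_two]
      at hD0 hD1 hE0 hE1
    have hJ10 := congrFun hJ1 0
    have hJ11 := congrFun hJ1 1
    simp [sig, eps, Matrix.mulVec, dotProduct, Fin.sum_univ_two,
      Matrix.sub_apply, Matrix.smul_apply, Matrix.add_apply, Matrix.transpose_apply,
      Matrix.one_apply, smul_eq_mul, Pi.sub_apply] at hJ10 hJ11
    have htr := hJ3
    simp only [Matrix.trace, Matrix.diag, Fin.sum_univ_two] at htr
    -- the cut direction
    set L := (c.E 0 - c.D 0) * c.n 1 - (c.E 1 - c.D 1) * c.n 0 with hLdef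
    have hu0 : c.E 0 - c.D 0 = L * c.n 1 := by
      rw [hLdef]
      linear_combination c.n 0 * hn_orth - (c.E 0 - c.D 0) * hn_unit
    have hu1 : c.E 1 - c.D 1 = -(L * c.n 0) := by
      rw [hLdef]
      linear_combination c.n 1 * hn_orth - (c.E 1 - c.D 1) * hn_unit
    have hL : L ≠ 0 := by
      intro h0
      apply c.D_ne_E
      have e0 : c.E 0 - c.D 0 = 0 := by rw [hu0, h0]; ring
      have e1 : c.E 1 - c.D 1 = 0 := by rw [hu1, h0]; ring
      funext i
      fin_cases i
      · show c.D 0 = c.E 0; linarith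
      · show c.D 1 = c.E 1; linarith
    have hrow0 : (Mp 0 0 - Mm 0 0) * (c.E 0 - c.D 0)
        + (Mp 0 1 - Mm 0 1) * (c.E 1 - c.D 1) = 0 := by
      linear_combination hE0 - hD0
    have hrow1 : (Mp 1 0 - Mm 1 0) * (c.E 0 - c.D 0)
        + (Mp 1 1 - Mm 1 1) * (c.E 1 - c.D 1) = 0 := by
      linear_combination hE1 - hD1
    rw [hu0, hu1] at hrow0 hrow1
    have he1 : (Mp 0 0 - Mm 0 0) * c.n 1 - (Mp 0 1 - Mm 0 1) * c.n 0 = 0 := by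
      have hfac : L * ((Mp 0 0 - Mm 0 0) * c.n 1 - (Mp 0 1 - Mm 0 1) * c.n 0) = 0 := by
        linear_combination hrow0
      exact (mul_eq_zero.mp hfac).resolve_left hL
    have he2 : (Mp 1 0 - Mm 1 0) * c.n 1 - (Mp 1 1 - Mm 1 1) * c.n 0 = 0 := by
      have hfac : L * ((Mp 1 0 - Mm 1 0) * c.n 1 - (Mp 1 1 - Mm 1 1) * c.n 0) = 0 := by
        linear_combination hrow1
      exact (mul_eq_zero.mp hfac).resolve_left hL
    obtain ⟨k1, k2, k3, k4, hq⟩ := key_alg (Mp 0 0) (Mp 0 1) (Mp 1 0) (Mp 1 1)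
      (Mm 0 0) (Mm 0 1) (Mm 1 0) (Mm 1 1) qp qm (c.n 0) (c.n 1)
      hn_unit he1 he2 (by linear_combination htr)
      (by linear_combination hJ10) (by linear_combination hJ11)
    have hMeq : Mp = Mm := by
      apply Matrix.ext
      intro i j
      fin_cases i <;> fin_cases j
      · exact k1
      · exact k2
      · exact k3
      · exact k4
    have hbeq : bp = bm := by
      funext i
      fin_cases i
      · show bp 0 = bm 0
        linear_combination hD0 - c.D 0 * k1 - c.D 1 * k2
      · show bp 1 = bm 1
        linear_combination hD1 - c.D 0 * k3 - c.D 1 * k4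
    -- collapse vtilde
    have hvt : ∀ (x : Fin 2 → ℝ) (j : Fin 2),
        c.vtilde Mp bp Mm bm x j = (Mp.mulVec x + bp) j := by
      intro x j
      unfold CutTriangle.vtilde
      rw [← hMeq, ← hbeq]
      simp
      fin_cases j <;> simp [Matrix.vecHead, Matrix.vecTail]
    have hd0 : edgeMean c.A₂ c.A₃ (fun x => c.vtilde Mp bp Mm bm x 0) = 0 := congrFun hdof 0
    have hd1 : edgeMean c.A₁ c.A₃ (fun x => c.vtilde Mp bp Mm bm x 0) = 0 := congrFun hdof 1
    have hd2 : edgeMean c.A₁ c.A₂ (fun x => c.vtilde Mp bp Mm bm x 0) = 0 := congrFun hdof 2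
    have hd3 : edgeMean c.A₂ c.A₃ (fun x => c.vtilde Mp bp Mm bm x 1) = 0 := congrFun hdof 3
    have hd4 : edgeMean c.A₁ c.A₃ (fun x => c.vtilde Mp bp Mm bm x 1) = 0 := congrFun hdof 4
    have hd5 : edgeMean c.A₁ c.A₂ (fun x => c.vtilde Mp bp Mm bm x 1) = 0 := congrFun hdof 5
    have hd6 : (area c.Tplus * qp + area c.Tminus * qm) / area c.T = 0 := congrFun hdof 6
    simp only [hvt] at hd0 hd1 hd2 hd3 hd4 hd5
    rw [edgeMean_affine] at hd0 hd1 hd2 hd3 hd4 hd5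
    simp only [Pi.add_apply, Matrix.mulVec, dotProduct, Fin.sum_univ_two]
      at hd0 hd1 hd2 hd3 hd4 hd5
    obtain ⟨z00, z01, zb0⟩ := c.row_zero (Mp 0 0) (Mp 0 1) (bp 0)
      (by linear_combination 2 * hd0) (by linear_combination 2 * hd1)
      (by linear_combination 2 * hd2)
    obtain ⟨z10, z11, zb1⟩ := c.row_zero (Mp 1 0) (Mp 1 1) (bp 1)
      (by linear_combination 2 * hd3) (by linear_combination 2 * hd4)
      (by linear_combination 2 * hd5)
    have hMp0 : Mp = 0 := by
      apply Matrix.ext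
      intro i j
      fin_cases i <;> fin_cases j
      · exact z00
      · exact z01
      · exact z10
      · exact z11
    have hbp0 : bp = 0 := by
      funext i
      fin_cases i
      · exact zb0
      · exact zb1
    have hnum : area c.Tplus * qp + area c.Tminus * qm = 0 := by
      rcases div_eq_zero_iff.mp hd6 with h | h
      · exact h
      · exact absurd h hat
    have hqm : qm = qp + 1 := by linarith
    refine ⟨hMp0, hbp0, hMeq ▸ hMp0, hbeq ▸ hbp0, ?_, ?_⟩
    · rw [← neg_div, eq_div_iff hat]
      linear_combination hnum - qp * hsum - area c.Tminus * hqm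
    · rw [eq_div_iff hat]
      linear_combination hnum - qm * hsum + area c.Tplus * hqm
  · rintro ⟨rfl, rfl, rfl, rfl, rfl, rfl⟩
    refine ⟨?_, ?_, ?_, ?_⟩
    · funext i
      have hi : ∀ j : Fin 2, ((sig 1 0 (-(area c.Tminus / area c.T))).mulVec c.n
          - (sig 1 0 (area c.Tplus / area c.T)).mulVec c.n) j = c.n j := by
        intro j
        simp [sig, eps, Matrix.mulVec, dotProduct, Fin.sum_univ_two,
          Matrix.sub_apply, Matrix.smul_apply, Matrix.add_apply, Matrix.transpose_apply,
          Matrix.one_apply, smul_eq_mul, Pi.sub_apply]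
        fin_cases j <;> simp
        · field_simp
          linear_combination c.n 0 * hsum
        · field_simp
          linear_combination c.n 1 * hsum
      exact hi i
    · intro x _
      rfl
    · rfl
    · have hvt0 : ∀ (P Q : Fin 2 → ℝ) (j : Fin 2),
          edgeMean P Q (fun x =>
            c.vtilde (0 : Matrix (Fin 2) (Fin 2) ℝ) 0 0 0 x j) = 0 := by
        intro P Q j
        have hz : (fun x => c.vtilde (0 : Matrix (Fin 2) (Fin 2) ℝ) 0 0 0 x j)
            = fun _ => (0:ℝ) := by
          funext x
          unfold CutTriangle.vtilde
          simp
        rw [hz]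
        unfold edgeMean
        simp
      funext i
      fin_cases i
      · exact hvt0 c.A₂ c.A₃ 0
      · exact hvt0 c.A₁ c.A₃ 0
      · exact hvt0 c.A₁ c.A₂ 0
      · exact hvt0 c.A₂ c.A₃ 1
      · exact hvt0 c.A₁ c.A₃ 1
      · exact hvt0 c.A₁ c.A₂ 1
      · show (area c.Tplus * (-(area c.Tminus / area c.T))
            + area c.Tminus * (area c.Tplus / area c.T)) / area c.T = 0
        ring_nf


end StokesIFE
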